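/- The relations 'is a subdivision of' (existence of a reduction) and 'is an expansion of' (existence of a collapse) are partial orders on the set of pure cell complexes up to cc-isomorphism: both relations are reflexive, transitive, and antisymmetric modulo isomorphism. -/
import Mathlib


open scoped Classical

universe u v

/-- Underlying data of a combinatorial cell complex: a finite collection of
finite subsets of a vertex type `V` (the cells) together with a rank function. -/
structure Precc (V : Type u) where
  cells : Finset (Finset V)
  rk : Finset V → ℕ

namespace Precc

variable {V : Type u} [DecidableEq V] [Fintype V]

/-- The axioms of a combinatorial cell complex (cc): cells are nonempty, every
vertex of a cell is a (rank 0) cell, rank-0 cells are exactly the singletons,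
rank is strictly monotone, cells are closed under nonempty intersections, ranks
have no gaps, and the diamond property. -/
def IsCC (K : Precc V) : Prop :=
  (∀ x ∈ K.cells, x.Nonempty) ∧
  (∀ x ∈ K.cells, ∀ a ∈ x, ({a} : Finset V) ∈ K.cells) ∧
  (∀ x ∈ K.cells, (K.rk x = 0 ↔ x.card = 1)) ∧
  (∀ x ∈ K.cells, ∀ y ∈ K.cells, x ⊂ y → K.rk x < K.rk y) ∧
  (∀ x ∈ K.cells, ∀ y ∈ K.cells, x ∩ y = ∅ ∨ x ∩ y ∈ K.cells) ∧
  (∀ x ∈ K.cells, ∀ y ∈ K.cells, x ⊂ y →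
    ∃ z ∈ K.cells, x ⊂ z ∧ z ⊆ y ∧ K.rk z = K.rk x + 1) ∧
  (∀ x ∈ K.cells, ∀ y ∈ K.cells, x ⊆ y → K.rk y = K.rk x + 2 →
    ∃ z₁ ∈ K.cells, ∃ z₂ ∈ K.cells, z₁ ≠ z₂ ∧
      ∀ z ∈ K.cells, ((x ⊆ z ∧ z ⊆ y ∧ K.rk z = K.rk x + 1) ↔ (z = z₁ ∨ z = z₂)))

/-- The set of cofaces of a cell. -/
noncomputable def cface (K : Precc V) (x : Finset V) : Finset (Finset V) :=
  K.cells.filter fun y => x ⊆ y ∧ K.rk y = K.rk x + 1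

/-- The set of faces of a cell. -/
noncomputable def face (K : Precc V) (x : Finset V) : Finset (Finset V) :=
  K.cells.filter fun y => y ⊆ x ∧ K.rk y + 1 = K.rk x

/-- The rank (dimension) of the complex. -/
def Rk (K : Precc V) : ℕ := K.cells.sup K.rk

/-- The set of cells of a given rank. -/
noncomputable def cellsOfRank (K : Precc V) (r : ℕ) : Finset (Finset V) :=
  K.cells.filter fun x => K.rk x = r

/-- The dual set of a set of vertices: the maximal cells containing it. -/
noncomputable def dualSet (K : Precc V) (A : Finset V) : Finset (Finset V) :=
  (K.cellsOfRank K.Rk).filter fun z => A ⊆ z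

/-- A cc is pure if every maximal cell has maximal rank. -/
def Pure (K : Precc V) : Prop :=
  ∀ x ∈ K.cells, (∀ y ∈ K.cells, ¬ x ⊂ y) → K.rk x = K.Rk

/-- A cc is graph-based if every edge (1-cell) has exactly two vertices. -/
def GraphBased (K : Precc V) : Prop :=
  ∀ e ∈ K.cells, K.rk e = 1 → e.card = 2

/-- Non-branching: every sub-maximal cell lies in at most two maximal cells. -/
def NonBranching (K : Precc V) : Prop :=
  ∀ y ∈ K.cells, K.rk y + 1 = K.Rk → (K.dualSet y).card ≤ 2

def NonSingular (K : Precc V) : Prop :=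
  K.GraphBased ∧ K.Pure ∧ K.NonBranching

/-- Closed: non-singular and every sub-maximal cell lies in exactly two
maximal cells. -/
def Closed (K : Precc V) : Prop :=
  K.NonSingular ∧ ∀ y ∈ K.cells, K.rk y + 1 = K.Rk → (K.dualSet y).card = 2

/-- Cells of the boundary: cells contained in a sub-maximal cell lying in
exactly one maximal cell. -/
noncomputable def bdryCells (K : Precc V) : Finset (Finset V) :=
  K.cells.filter fun x =>
    ∃ y ∈ K.cells, x ⊆ y ∧ K.rk y + 1 = K.Rk ∧ (K.dualSet y).card = 1

/-- The boundary complex. -/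
noncomputable def boundary (K : Precc V) : Precc V :=
  ⟨K.bdryCells, K.rk⟩

/-- The dual complex of a (pure) cc, with rank of the dual cell of `x` equal
to `Rk K - rk x` (encoded intrinsically via the intersection of the dual set). -/
noncomputable def dual (K : Precc V) : Precc (Finset V) :=
  ⟨K.cells.image K.dualSet, fun A => K.Rk - K.rk (A.inf id)⟩

/-- The barycentric subdivision: cells are nonempty chains of cells of `K`. -/
noncomputable def bdiv (K : Precc V) : Precc (Finset V) :=
  ⟨K.cells.powerset.filter fun c => c.Nonempty ∧ ∀ x ∈ c, ∀ y ∈ c, x ⊆ y ∨ y ⊆ x,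
   fun c => c.card - 1⟩

/-- Isomorphism of (pre)cell complexes: a rank-preserving bijection between the
cell sets preserving and reflecting inclusions. -/
def IsIso {A : Type u} {B : Type v} (K : Precc A) (L : Precc B) : Prop :=
  ∃ f : Finset A → Finset B,
    Set.BijOn f ↑K.cells ↑L.cells ∧
    (∀ x ∈ K.cells, ∀ y ∈ K.cells, (x ⊆ y ↔ f x ⊆ f y)) ∧
    (∀ x ∈ K.cells, L.rk (f x) = K.rk x)

/-- Adjacency of two vertices via an edge of `K`. -/
def EdgeRel (K : Precc V) (a b : V) : Prop :=
  ({a, b} : Finset V) ∈ K.cells ∧ K.rk ({a, b} : Finset V) = 1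

/-- Connectedness of a cc: graph-based, and the 1-skeleton is connected. -/
def Connected (K : Precc V) : Prop :=
  K.GraphBased ∧ ∀ a b : V, ({a} : Finset V) ∈ K.cells → ({b} : Finset V) ∈ K.cells →
    Relation.ReflTransGen K.EdgeRel a b

/-- Cell-connectedness: the 1-skeleton of every cell is connected. -/
def CellConnected (K : Precc V) : Prop :=
  K.GraphBased ∧ ∀ x ∈ K.cells, ∀ a ∈ x, ∀ b ∈ x,
    Relation.ReflTransGen (fun s t => s ∈ x ∧ t ∈ x ∧ K.EdgeRel s t) a b

/-- A local cc: connected and cell-connected. -/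
def LocalCC (K : Precc V) : Prop := K.Connected ∧ K.CellConnected

/-- The vertex set of a cc. -/
noncomputable def vertices (K : Precc V) : Finset V :=
  Finset.univ.filter fun a => ({a} : Finset V) ∈ K.cells

/-- `J` is a sub-cell complex of `K`. -/
def Subcomplex (J K : Precc V) : Prop :=
  J.cells ⊆ K.cells ∧ ∀ x ∈ J.cells, J.rk x = K.rk x

/-- The edges of `K` containing a given vertex. -/
noncomputable def EdgesAt (K : Precc V) (a : V) : Finset (Finset V) :=
  K.cells.filter fun e => K.rk e = 1 ∧ a ∈ e

/-- The edges of `K` at a vertex `a` that are contained in a cell `x`. -/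
noncomputable def edgesIn (K : Precc V) (a : V) (x : Finset V) : Finset (Finset V) :=
  (K.EdgesAt a).filter fun e => e ⊆ x

/-- `r`-fullness: every set of `j` edges at a vertex (`2 ≤ j ≤ r`) is the set of
edges at that vertex of some `j`-cell. -/
def RFull (K : Precc V) (r : ℕ) : Prop :=
  ∀ a : V, ({a} : Finset V) ∈ K.cells → ∀ j : ℕ, 2 ≤ j → j ≤ r →
    ∀ S ⊆ K.EdgesAt a, S.card = j →
      ∃ x ∈ K.cells, K.rk x = j ∧ K.edgesIn a x = S

/-- Fullness (= 2-fullness). -/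
def Full (K : Precc V) : Prop := K.RFull 2

/-- `n`-regularity: every vertex lies in exactly `n` edges. -/
def Regular (K : Precc V) (n : ℕ) : Prop :=
  ∀ a ∈ K.vertices, (K.EdgesAt a).card = n

/-- `m`-edge-regularity: every edge lies in exactly `m` 2-cells. -/
def EdgeRegular (K : Precc V) (m : ℕ) : Prop :=
  ∀ e ∈ K.cells, K.rk e = 1 → ((K.cellsOfRank 2).filter fun C => e ⊆ C).card = m

/-- Simplicial complex: every nonempty subset of a cell is a cell. -/
def Simplicial (K : Precc V) : Prop :=
  ∀ x ∈ K.cells, ∀ y : Finset V, y ⊆ x → y.Nonempty → y ∈ K.cells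

/-- Adjacency in the dual graph: two distinct maximal cells meeting along an
interior sub-maximal cell. -/
def DualAdj (K : Precc V) (z z' : Finset V) : Prop :=
  z ∈ K.cellsOfRank K.Rk ∧ z' ∈ K.cellsOfRank K.Rk ∧ z ≠ z' ∧
  ∃ y ∈ K.cells, K.rk y + 1 = K.Rk ∧ y ⊆ z ∧ y ⊆ z' ∧ (K.dualSet y).card = 2

/-- A pinch: a cell whose set of containing maximal cells induces a
disconnected subgraph of the dual graph. -/
def IsPinch (K : Precc V) (x : Finset V) : Prop :=
  ¬ ∀ z ∈ K.dualSet x, ∀ z' ∈ K.dualSet x,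
      Relation.ReflTransGen
        (fun a b => a ∈ K.dualSet x ∧ b ∈ K.dualSet x ∧ K.DualAdj a b) z z'

/-- Non-pinching: no `K`-pinch and no `∂K`-pinch. -/
def NonPinching (K : Precc V) : Prop :=
  (∀ x ∈ K.cells, ¬ K.IsPinch x) ∧ (∀ x ∈ K.boundary.cells, ¬ K.boundary.IsPinch x)

/-- The Euler characteristic. -/
noncomputable def chi (K : Precc V) : ℤ :=
  ∑ r ∈ Finset.range (K.Rk + 1), (-1 : ℤ) ^ r * ((K.cellsOfRank r).card : ℤ)

/-- Restriction of `K` to the cells contained in `A`. -/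
noncomputable def restrict (K : Precc V) (A : Finset V) : Precc V :=
  ⟨K.cells.filter fun x => x ⊆ A, K.rk⟩

/-- A shelling of a (non-singular) cc: for rank 0 the trivial order on the one
point, for rank ≥ 1 a linear order of the facets such that the boundary of the
first facet has a shelling and each facet meets the previous ones in a
non-singular complex of rank one less that has a shelling completable into a
shelling of the boundary of the facet, with the boundary conditions of
Definition 4.9 of the paper (see `IsShelling` below).
The intersection of the `k`-th facet with the union of the previous ones,
as a subcomplex of `K`. -/
noncomputable def interComplex (K : Precc V) (L : List (Finset V)) (k : ℕ)
    (hk : k < L.length) : Precc V :=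
  K.restrict (L.get ⟨k, hk⟩ ∩ (L.take k).foldr (· ∪ ·) ∅)

set_option maxHeartbeats 1000000 in
inductive IsShelling : Precc V → List (Finset V) → Prop where
  | point (K : Precc V) (x : Finset V) (hx : K.cells = {x}) (h0 : K.rk x = 0) :
      IsShelling K [x]
  | step (K : Precc V) (L : List (Finset V)) (L₀ : List (Finset V))
      (S S' : ℕ → List (Finset V))
      (hR : 1 ≤ K.Rk) (hnd : L.Nodup) (hne : L ≠ [])
      (henum : L.toFinset = K.cellsOfRank K.Rk)
      (hfirst : IsShelling ((K.restrict L.headI).boundary) L₀)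
      (hS : ∀ (k : ℕ) (hk : k < L.length), 0 < k →
        IsShelling (K.interComplex L k hk) (S k))
      (hS' : ∀ (k : ℕ) (hk : k < L.length), 0 < k →
        IsShelling ((K.restrict (L.get ⟨k, hk⟩)).boundary) (S' k))
      (hpre : ∀ (k : ℕ), k < L.length → 0 < k → S k <+: S' k)
      (hns : ∀ (k : ℕ) (hk : k < L.length), 0 < k →
        (K.interComplex L k hk).NonSingular ∧
        (K.interComplex L k hk).Rk + 1 = K.Rk ∧
        (k < L.length - 1 → (K.interComplex L k hk).bdryCells.Nonempty) ∧
        ((K.interComplex L k hk).bdryCells = ∅ →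
          k = L.length - 1 ∧ K.Closed ∧
          (K.interComplex L k hk).cells = ((K.restrict (L.get ⟨k, hk⟩)).boundary).cells)) :
      IsShelling K L

/-- A shellable cc. -/
def Shellable (K : Precc V) : Prop :=
  K.NonSingular ∧ ∃ L : List (Finset V), IsShelling K L

/-- The connection relation: `∇^a_b e = f`, i.e. `f` is the edge at `b`
associated to the edge `e` at `a` via the unique 2-cell containing `e` and the
edge `{a,b}` (and `{a,b}` is sent to itself). -/
def ConnRel (K : Precc V) (a b : V) (e f : Finset V) : Prop :=
  (e = ({a, b} : Finset V) ∧ f = ({a, b} : Finset V)) ∨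
  (e ≠ ({a, b} : Finset V) ∧ f ≠ ({a, b} : Finset V) ∧
    e ∈ K.cells ∧ f ∈ K.cells ∧ K.rk e = 1 ∧ K.rk f = 1 ∧ a ∈ e ∧ b ∈ f ∧
    ∃ C ∈ K.cells, K.rk C = 2 ∧ e ⊆ C ∧ ({a, b} : Finset V) ⊆ C ∧ f ⊆ C)

/-- `C` is a connected component of a 2-cell of `K`. -/
def IsComponentOfTwoCell (K : Precc V) (C : Finset V) : Prop :=
  ∃ C₀ ∈ K.cells, K.rk C₀ = 2 ∧ C ⊆ C₀ ∧ C.Nonempty ∧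
    (∀ e ∈ K.cells, K.rk e = 1 → e ⊆ C₀ → (e ∩ C).Nonempty → e ⊆ C) ∧
    (∀ a ∈ C, ∀ b ∈ C,
      Relation.ReflTransGen (fun s t => s ∈ C ∧ t ∈ C ∧ K.EdgeRel s t) a b)

/-- `c` is a cyclic enumeration of the vertex set `C` along edges of `K`. -/
def IsCycleOf (K : Precc V) (C : Finset V) (c : List V) : Prop :=
  c ≠ [] ∧ c.Nodup ∧ c.toFinset = C ∧
  ∀ a : V, c.head? = some a → List.Chain' K.EdgeRel (c ++ [a])

/-- A path in the 1-skeleton, recorded by its list of visited vertices. -/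
def IsPathList (K : Precc V) (l : List V) : Prop :=
  l ≠ [] ∧ List.Chain' K.EdgeRel l

/-- Transport of edges along a path via the connection. -/
inductive Transport (K : Precc V) : List V → Finset V → Finset V → Prop where
  | single (a : V) (e : Finset V) : Transport K [a] e e
  | cons {a b : V} {l : List V} {e f g : Finset V} :
      ConnRel K a b e f → Transport K (b :: l) f g → Transport K (a :: b :: l) e g

/-- `p` and `p'` are the two complementary arcs of the boundary cycle of the
2-cell component `C`, with the same endpoints. -/
def ComplementaryArcs (K : Precc V) (C : Finset V) (p p' : List V) : Prop :=
  p ≠ [] ∧ p' ≠ [] ∧ p.head? = p'.head? ∧ p.getLast? = p'.getLast? ∧ p.Nodup ∧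
  ∃ c : List V, IsCycleOf K C c ∧ ∃ a : V, c.head? = some a ∧
    (p ++ p'.reverse.tail = c ++ [a] ∨ p' ++ p.reverse.tail = c ++ [a])

/-- Elementary moves of paths: an edge move (deleting a back-and-forth along an
edge) and a 2-cell move (replacing an arc of a 2-cell component by the
complementary arc). -/
inductive Move (K : Precc V) : List V → List V → Prop where
  | edgeDel (a b : List V) (u w : V) (h : K.EdgeRel u w) :
      Move K (a ++ u :: w :: u :: b) (a ++ u :: b)
  | cellMove (a b p p' : List V) (C : Finset V)
      (hC : K.IsComponentOfTwoCell C) (harc : K.ComplementaryArcs C p p') :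
      Move K (a ++ p ++ b) (a ++ p' ++ b)

/-- Homotopy of paths: generated by finitely many moves (and their inverses). -/
def Homotopic (K : Precc V) (p q : List V) : Prop :=
  Relation.ReflTransGen (fun l l' => Move K l l' ∨ Move K l' l) p q

/-- Monodromy-freedom: the holonomy of the connection around the boundary loop
of any connected component of a 2-cell is the identity on the incident edges. -/
def MonodromyFree (K : Precc V) : Prop :=
  ∀ C : Finset V, K.IsComponentOfTwoCell C → ∀ c : List V, K.IsCycleOf C c →
    ∀ a : V, c.head? = some a →
      ∀ e f : Finset V, e ∈ K.cells → K.rk e = 1 → e ∩ C = {a} →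
        Transport K (c ++ [a]) e f → f = e

/-- Evenness: every connected component of every 2-cell has an even number of
vertices. -/
def EvenCC (K : Precc V) : Prop :=
  ∀ C : Finset V, K.IsComponentOfTwoCell C → Even C.card

/-- The collar of a vertex set `A` in `K`: cells meeting `A` properly. -/
noncomputable def collarCells (K : Precc V) (A : Finset V) : Finset (Finset V) :=
  K.cells.filter fun x => (x ∩ A).Nonempty ∧ ¬ x ⊆ A

/-- The set `E^x_A` of edges of `x` with exactly one vertex in `A`. -/
noncomputable def edgeCollar (K : Precc V) (A : Finset V) (x : Finset V) : Finset (Finset V) :=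
  K.cells.filter fun e => K.rk e = 1 ∧ e ⊆ x ∧ (e ∩ A).card = 1

/-- The `∼`-dual of a cell: the union of its dual in `K` and its dual in `∂K`. -/
noncomputable def bdualSet (K : Precc V) (x : Finset V) : Finset (Finset V) :=
  K.dualSet x ∪ (K.boundary.cells.filter fun y => K.rk y + 1 = K.Rk ∧ x ⊆ y)

/-- `J` is a (possibly empty) union of connected components of `K`. -/
def IsUnionOfComponents (K J : Precc V) : Prop :=
  ∃ W : Finset V, W ⊆ K.vertices ∧
    (∀ a ∈ W, ∀ b : V, Relation.ReflTransGen K.EdgeRel a b → b ∈ W) ∧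
    J.cells = K.cells.filter fun x => x ⊆ W

/-- `g` is the greatest lower bound of `S` among the cells of `K`. -/
def IsMeetOf (K : Precc V) (S : Finset (Finset V)) (g : Finset V) : Prop :=
  g ∈ K.cells ∧ (∀ s ∈ S, g ⊆ s) ∧ ∀ b ∈ K.cells, (∀ s ∈ S, b ⊆ s) → b ⊆ g

/-- `g` is the least upper bound of `S` among the cells of `K`. -/
def IsJoinOf (K : Precc V) (S : Finset (Finset V)) (g : Finset V) : Prop :=
  g ∈ K.cells ∧ (∀ s ∈ S, s ⊆ g) ∧ ∀ b ∈ K.cells, (∀ s ∈ S, s ⊆ b) → g ⊆ b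

/-- A reduction `ρ : J → K` (so that `J` is a subdivision of `K`). -/
def IsReduction (J K : Precc V) (ρ : Finset V → Finset V) : Prop :=
  (∀ x ∈ J.cells, ρ x ∈ K.cells) ∧
  (∀ y ∈ K.cells, ∃ x ∈ J.cells, ρ x = y) ∧
  (∀ x ∈ J.cells, ∀ y ∈ J.cells, x ⊆ y → ρ x ⊆ ρ y) ∧
  (∀ x ∈ J.cells, ∀ y ∈ J.cells, K.rk (ρ x) = 0 → ρ x = ρ y → x = y) ∧
  (∀ x ∈ J.cells, ∀ g : Finset V, IsMeetOf J (J.cface x) g →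
    ∀ h : Finset V, IsMeetOf K ((J.cface x).image ρ) h → ρ g = h) ∧
  (∀ x ∈ J.cells, ∀ y ∈ K.cells, ρ x ⊆ y →
    ∃ w ∈ J.cells, x ⊆ w ∧ J.rk w = K.rk y ∧ ρ w = y) ∧
  (∀ x ∈ J.cells, J.rk x + 1 = K.rk (ρ x) →
    ((J.cface x).filter fun w => ρ w = ρ x).card = 2) ∧
  (∀ x ∈ J.cells, J.rk x = K.rk (ρ x) →
    ∀ y ∈ K.cface (ρ x), ((J.cface x).filter fun w => ρ w = y).card = 1)

/-- A collapse `π : J → K` (so that `J` is an expansion of `K`). -/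
def IsCollapse (J K : Precc V) (π : Finset V → Finset V) : Prop :=
  (∀ x ∈ J.cells, π x ∈ K.cells) ∧
  (∀ y ∈ K.cells, ∃ x ∈ J.cells, π x = y) ∧
  (∀ x ∈ J.cells, ∀ y ∈ J.cells, x ⊆ y → π x ⊆ π y) ∧
  (∀ x ∈ J.cells, ∀ y ∈ J.cells, (∀ z ∈ K.cells, ¬ π x ⊂ z) → π x = π y → x = y) ∧
  (∀ x ∈ J.cells, 1 ≤ J.rk x → IsJoinOf K ((J.face x).image π) (π x)) ∧
  (∀ x ∈ J.cells, ∀ y ∈ K.cells, y ⊆ π x →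
    ∃ w ∈ J.cells, w ⊆ x ∧ J.rk w = K.rk y ∧ π w = y) ∧
  (∀ x ∈ J.cells, K.rk (π x) + 1 = J.rk x →
    ((J.face x).filter fun w => π w = π x).card = 2) ∧
  (∀ x ∈ J.cells, J.rk x = K.rk (π x) →
    ∀ y ∈ K.face (π x), ((J.face x).filter fun w => π w = y).card = 1)

/-- The domain `E_a^{dual b}` of the connection `∇^a_b`: edges at `a` lying in
a common 2-cell with the edge `{a,b}`. -/
noncomputable def connDomain (K : Precc V) (a b : V) : Finset (Finset V) :=
  (K.EdgesAt a).filter fun e =>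
    ∃ C ∈ K.cells, K.rk C = 2 ∧ e ⊆ C ∧ ({a, b} : Finset V) ⊆ C

end Precc

namespace Precc

variable {V : Type u} [DecidableEq V] [Fintype V]

section Statement19Helpers

set_option linter.unusedSectionVars false

variable {J K L : Precc V} {ρ ρ₁ ρ₂ π π₁ π₂ : Finset V → Finset V}

lemma rk_lt_of_ssubset (hK : K.IsCC) {x y : Finset V} (hx : x ∈ K.cells)
    (hy : y ∈ K.cells) (h : x ⊂ y) : K.rk x < K.rk y :=
  hK.2.2.2.1 x hx y hy h

lemma rk_le_of_subset (hK : K.IsCC) {x y : Finset V} (hx : x ∈ K.cells)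
    (hy : y ∈ K.cells) (h : x ⊆ y) : K.rk x ≤ K.rk y := by
  rcases eq_or_ne x y with rfl | hne
  · exact le_rfl
  · exact (rk_lt_of_ssubset hK hx hy (lt_of_le_of_ne h hne)).le

lemma eq_of_subset_of_rk_le (hK : K.IsCC) {x y : Finset V} (hx : x ∈ K.cells)
    (hy : y ∈ K.cells) (h : x ⊆ y) (hr : K.rk y ≤ K.rk x) : x = y := by
  by_contra hne
  exact absurd (rk_lt_of_ssubset hK hx hy (lt_of_le_of_ne h hne)) (by omega)

lemma mem_cface' {x z : Finset V} :
    z ∈ K.cface x ↔ z ∈ K.cells ∧ x ⊆ z ∧ K.rk z = K.rk x + 1 := by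
  simp [cface, Finset.mem_filter]

lemma mem_face' {x z : Finset V} :
    z ∈ K.face x ↔ z ∈ K.cells ∧ z ⊆ x ∧ K.rk z + 1 = K.rk x := by
  simp [face, Finset.mem_filter]

lemma exists_face_between (hK : K.IsCC) :
    ∀ (n : ℕ) {x y : Finset V}, x ∈ K.cells → y ∈ K.cells → x ⊂ y →
      K.rk y ≤ K.rk x + n →
      ∃ z ∈ K.cells, x ⊆ z ∧ z ⊆ y ∧ K.rk z + 1 = K.rk y := by
  intro n
  induction n with
  | zero =>
    intro x y hx hy hxy hn
    exact absurd (rk_lt_of_ssubset hK hx hy hxy) (by omega)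
  | succ n ih =>
    intro x y hx hy hxy hn
    obtain ⟨z, hz, hxz, hzy, hrz⟩ := hK.2.2.2.2.2.1 x hx y hy hxy
    rcases eq_or_ne z y with rfl | hne
    · exact ⟨x, hx, subset_rfl, hxy.subset, by omega⟩
    · obtain ⟨w, hw, hzw, hwy, hrw⟩ :=
        ih hz hy (lt_of_le_of_ne hzy hne) (by omega)
      exact ⟨w, hw, hxz.subset.trans hzw, hwy, hrw⟩

lemma exists_face_mem (hK : K.IsCC) {x : Finset V} {a : V} (hx : x ∈ K.cells)
    (hr : 1 ≤ K.rk x) (ha : a ∈ x) :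
    ∃ z, z ∈ K.cells ∧ z ⊆ x ∧ K.rk z + 1 = K.rk x ∧ a ∈ z := by
  have hac : ({a} : Finset V) ∈ K.cells := hK.2.1 x hx a ha
  have hsub : ({a} : Finset V) ⊆ x := Finset.singleton_subset_iff.mpr ha
  have hne : ({a} : Finset V) ≠ x := by
    rintro rfl
    have := (hK.2.2.1 _ hac).mpr (Finset.card_singleton a)
    omega
  obtain ⟨z, hz, h1, h2, h3⟩ :=
    exists_face_between hK (K.rk x) hac hx (lt_of_le_of_ne hsub hne) (by omega)
  exact ⟨z, hz, h2, h3, h1 (Finset.mem_singleton_self a)⟩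

lemma subset_of_forall_face (hK : K.IsCC) {x b : Finset V} (hx : x ∈ K.cells)
    (hr : 1 ≤ K.rk x)
    (hb : ∀ z ∈ K.cells, z ⊆ x → K.rk z + 1 = K.rk x → z ⊆ b) : x ⊆ b := by
  intro a ha
  obtain ⟨z, hz, h1, h2, h3⟩ := exists_face_mem hK hx hr ha
  exact hb z hz h1 h2 h3

lemma meet_unique {S : Finset (Finset V)} {g g' : Finset V}
    (h : K.IsMeetOf S g) (h' : K.IsMeetOf S g') : g = g' :=
  subset_antisymm (h'.2.2 g h.1 h.2.1) (h.2.2 g' h'.1 h'.2.1)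

lemma inf_mem_cells (hK : K.IsCC) {S : Finset (Finset V)} (hne : S.Nonempty) :
    (∀ s ∈ S, s ∈ K.cells) → (S.inf id).Nonempty → S.inf id ∈ K.cells := by
  induction hne using Finset.Nonempty.cons_induction with
  | singleton a =>
    intro hS _
    simpa using hS a (Finset.mem_singleton_self a)
  | cons a S ha hne ih =>
    intro hS hinf
    simp only [Finset.inf_cons, id_eq, Finset.inf_eq_inter] at hinf ⊢
    have hm : S.inf id ∈ K.cells :=
      ih (fun s hs => hS s (Finset.mem_cons_of_mem hs))
        (by obtain ⟨v, hv⟩ := hinf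
            exact ⟨v, (Finset.mem_inter.mp (by simpa [Finset.inf_eq_inter] using hv)).2⟩)
    rcases hK.2.2.2.2.1 a (hS a (Finset.mem_cons_self a S)) (S.inf id) hm with h0 | h1
    · exact absurd h0 hinf.ne_empty
    · exact h1

lemma exists_meet (hK : K.IsCC) {S : Finset (Finset V)}
    (hS : ∀ s ∈ S, s ∈ K.cells) (hne : S.Nonempty) {c : Finset V}
    (hc : c ∈ K.cells) (hlb : ∀ s ∈ S, c ⊆ s) :
    ∃ m, K.IsMeetOf S m ∧ c ⊆ m := by
  have hcm : c ≤ S.inf id := Finset.le_inf fun s hs => hlb s hs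
  have hm : S.inf id ∈ K.cells :=
    inf_mem_cells hK hne hS ((hK.1 c hc).mono hcm)
  exact ⟨S.inf id, ⟨hm, fun s hs => by simpa using (Finset.inf_le hs : S.inf id ≤ id s),
    fun b _ hlb' => Finset.le_inf fun s hs => hlb' s hs⟩, hcm⟩

lemma exists_maximal_cell (K : Precc V) {z : Finset V} (hz : z ∈ K.cells) :
    ∃ m ∈ K.cells, z ⊆ m ∧ ∀ w ∈ K.cells, ¬ m ⊂ w := by
  obtain ⟨m, hm, hmax⟩ := Finset.exists_max_image
    (K.cells.filter fun w => z ⊆ w) Finset.card ⟨z, by simp [hz]⟩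
  simp only [Finset.mem_filter] at hm
  refine ⟨m, hm.1, hm.2, fun w hw hlt => ?_⟩
  have := hmax w (Finset.mem_filter.mpr ⟨hw, hm.2.trans hlt.subset⟩)
  exact absurd this (by simpa using Finset.card_lt_card hlt)

lemma red_rk_le (hJ : J.IsCC) (h : IsReduction J K ρ) {x : Finset V}
    (hx : x ∈ J.cells) : J.rk x ≤ K.rk (ρ x) := by
  obtain ⟨w, hw, hxw, hr, -⟩ := h.2.2.2.2.2.1 x hx (ρ x) (h.1 x hx) subset_rfl
  exact hr ▸ rk_le_of_subset hJ hx hw hxw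

lemma col_rk_le (hJ : J.IsCC) (h : IsCollapse J K π) {x : Finset V}
    (hx : x ∈ J.cells) : K.rk (π x) ≤ J.rk x := by
  obtain ⟨w, hw, hwx, hr, -⟩ := h.2.2.2.2.2.1 x hx (π x) (h.1 x hx) subset_rfl
  exact hr ▸ rk_le_of_subset hJ hw hx hwx

lemma red_refl (hK : K.IsCC) : IsReduction K K id := by
  refine ⟨fun x hx => hx, fun y hy => ⟨y, hy, rfl⟩, fun x _ y _ h => h,
    fun x _ y _ _ h => h, ?_, ?_, ?_, ?_⟩
  · intro x hx g hg h hh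
    rw [Finset.image_id] at hh
    exact meet_unique hg hh
  · intro x hx y hy hsub
    exact ⟨y, hy, hsub, rfl, rfl⟩
  · intro x hx habs
    simp only [id_eq] at habs
    omega
  · intro x hx hrk y hy
    have : ((K.cface x).filter fun w => id w = y) = {y} := by
      ext w
      simp only [Finset.mem_filter, Finset.mem_singleton, id_eq]
      exact ⟨fun h => h.2, fun h => ⟨h ▸ hy, h⟩⟩
    rw [this, Finset.card_singleton]

lemma col_refl (hK : K.IsCC) : IsCollapse K K id := by
  refine ⟨fun x hx => hx, fun y hy => ⟨y, hy, rfl⟩, fun x _ y _ h => h,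
    fun x _ y _ _ h => h, ?_, ?_, ?_, ?_⟩
  · intro x hx hr
    rw [Finset.image_id]
    refine ⟨hx, fun s hs => (mem_face'.mp hs).2.1, ?_⟩
    intro b hb hub
    exact subset_of_forall_face hK hx hr
      (fun z hz h1 h2 => hub z (mem_face'.mpr ⟨hz, h1, h2⟩))
  · intro x hx y hy hsub
    exact ⟨y, hy, hsub, rfl, rfl⟩
  · intro x hx habs
    simp only [id_eq] at habs
    omega
  · intro x hx hrk y hy
    have : ((K.face x).filter fun w => id w = y) = {y} := by
      ext w
      simp only [Finset.mem_filter, Finset.mem_singleton, id_eq]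
      exact ⟨fun h => h.2, fun h => ⟨h ▸ hy, h⟩⟩
    rw [this, Finset.card_singleton]

lemma red_antisymm (hJ : J.IsCC) (hK : K.IsCC) (h1 : IsReduction J K ρ₁)
    (h2 : IsReduction K J ρ₂) : IsIso J K := by
  have himg : J.cells.image ρ₁ = K.cells := by
    apply Finset.Subset.antisymm
    · intro y hy
      obtain ⟨x, hx, rfl⟩ := Finset.mem_image.mp hy
      exact h1.1 x hx
    · intro y hy
      obtain ⟨x, hx, hxy⟩ := h1.2.1 y hy
      exact Finset.mem_image.mpr ⟨x, hx, hxy⟩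
  have himg2 : K.cells.image ρ₂ = J.cells := by
    apply Finset.Subset.antisymm
    · intro y hy
      obtain ⟨x, hx, rfl⟩ := Finset.mem_image.mp hy
      exact h2.1 x hx
    · intro y hy
      obtain ⟨x, hx, hxy⟩ := h2.2.1 y hy
      exact Finset.mem_image.mpr ⟨x, hx, hxy⟩
  have hcard : K.cells.card ≤ J.cells.card := himg ▸ Finset.card_image_le
  have hcard2 : J.cells.card ≤ K.cells.card := himg2 ▸ Finset.card_image_le
  have hinj : Set.InjOn ρ₁ ↑J.cells :=
    Finset.injOn_of_card_image_eq (by rw [himg]; omega)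
  have hinj2 : Set.InjOn ρ₂ ↑K.cells :=
    Finset.injOn_of_card_image_eq (by rw [himg2]; omega)
  have hs1 : ∑ y ∈ K.cells, K.rk y = ∑ x ∈ J.cells, K.rk (ρ₁ x) := by
    rw [← himg]
    exact Finset.sum_image fun a ha b hb hab => hinj ha hb hab
  have hs2 : ∑ x ∈ J.cells, J.rk x = ∑ y ∈ K.cells, J.rk (ρ₂ y) := by
    rw [← himg2]
    exact Finset.sum_image fun a ha b hb hab => hinj2 ha hb hab
  have hle1 : ∀ x ∈ J.cells, J.rk x ≤ K.rk (ρ₁ x) := fun x hx => red_rk_le hJ h1 hx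
  have hle2 : ∀ y ∈ K.cells, K.rk y ≤ J.rk (ρ₂ y) := fun y hy => red_rk_le hK h2 hy
  have hsum1 : ∑ x ∈ J.cells, J.rk x ≤ ∑ x ∈ J.cells, K.rk (ρ₁ x) :=
    Finset.sum_le_sum hle1
  have hsum2 : ∑ y ∈ K.cells, K.rk y ≤ ∑ y ∈ K.cells, J.rk (ρ₂ y) :=
    Finset.sum_le_sum hle2
  have hrkeq : ∀ x ∈ J.cells, J.rk x = K.rk (ρ₁ x) :=
    (Finset.sum_eq_sum_iff_of_le hle1).mp (by omega)
  refine ⟨ρ₁, ⟨fun x hx => by exact_mod_cast h1.1 x hx, hinj, ?_⟩, ?_,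
    fun x hx => (hrkeq x hx).symm⟩
  · intro y hy
    obtain ⟨x, hx, hxy⟩ := h1.2.1 y hy
    exact ⟨x, hx, hxy⟩
  · intro x hx y hy
    constructor
    · exact fun h => h1.2.2.1 x hx y hy h
    · intro hsub
      obtain ⟨w, hw, hxw, -, hρw⟩ := h1.2.2.2.2.2.1 x hx (ρ₁ y) (h1.1 y hy) hsub
      have : w = y := hinj (by exact_mod_cast hw) (by exact_mod_cast hy) hρw
      exact this ▸ hxw

lemma col_antisymm (hJ : J.IsCC) (hK : K.IsCC) (h1 : IsCollapse J K π₁)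
    (h2 : IsCollapse K J π₂) : IsIso J K := by
  have himg : J.cells.image π₁ = K.cells := by
    apply Finset.Subset.antisymm
    · intro y hy
      obtain ⟨x, hx, rfl⟩ := Finset.mem_image.mp hy
      exact h1.1 x hx
    · intro y hy
      obtain ⟨x, hx, hxy⟩ := h1.2.1 y hy
      exact Finset.mem_image.mpr ⟨x, hx, hxy⟩
  have himg2 : K.cells.image π₂ = J.cells := by
    apply Finset.Subset.antisymm
    · intro y hy
      obtain ⟨x, hx, rfl⟩ := Finset.mem_image.mp hy
      exact h2.1 x hx
    · intro y hy
      obtain ⟨x, hx, hxy⟩ := h2.2.1 y hy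
      exact Finset.mem_image.mpr ⟨x, hx, hxy⟩
  have hcard : K.cells.card ≤ J.cells.card := himg ▸ Finset.card_image_le
  have hcard2 : J.cells.card ≤ K.cells.card := himg2 ▸ Finset.card_image_le
  have hinj : Set.InjOn π₁ ↑J.cells :=
    Finset.injOn_of_card_image_eq (by rw [himg]; omega)
  have hinj2 : Set.InjOn π₂ ↑K.cells :=
    Finset.injOn_of_card_image_eq (by rw [himg2]; omega)
  have hs1 : ∑ y ∈ K.cells, K.rk y = ∑ x ∈ J.cells, K.rk (π₁ x) := by
    rw [← himg]
    exact Finset.sum_image fun a ha b hb hab => hinj ha hb hab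
  have hs2 : ∑ x ∈ J.cells, J.rk x = ∑ y ∈ K.cells, J.rk (π₂ y) := by
    rw [← himg2]
    exact Finset.sum_image fun a ha b hb hab => hinj2 ha hb hab
  have hle1 : ∀ x ∈ J.cells, K.rk (π₁ x) ≤ J.rk x := fun x hx => col_rk_le hJ h1 hx
  have hle2 : ∀ y ∈ K.cells, J.rk (π₂ y) ≤ K.rk y := fun y hy => col_rk_le hK h2 hy
  have hsum1 : ∑ x ∈ J.cells, K.rk (π₁ x) ≤ ∑ x ∈ J.cells, J.rk x :=
    Finset.sum_le_sum hle1
  have hsum2 : ∑ y ∈ K.cells, J.rk (π₂ y) ≤ ∑ y ∈ K.cells, K.rk y :=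
    Finset.sum_le_sum hle2
  have hrkeq : ∀ x ∈ J.cells, K.rk (π₁ x) = J.rk x :=
    (Finset.sum_eq_sum_iff_of_le hle1).mp (by omega)
  refine ⟨π₁, ⟨fun x hx => by exact_mod_cast h1.1 x hx, hinj, ?_⟩, ?_,
    fun x hx => hrkeq x hx⟩
  · intro y hy
    obtain ⟨x, hx, hxy⟩ := h1.2.1 y hy
    exact ⟨x, hx, hxy⟩
  · intro x hx y hy
    constructor
    · exact fun h => h1.2.2.1 x hx y hy h
    · intro hsub
      obtain ⟨w, hw, hwy, -, hπw⟩ := h1.2.2.2.2.2.1 y hy (π₁ x) (h1.1 x hx) hsub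
      have : w = x := hinj (by exact_mod_cast hw) (by exact_mod_cast hx) hπw
      exact this ▸ hwy

lemma red_trans (hJ : J.IsCC) (hK : K.IsCC) (hL : L.IsCC)
    (h1 : IsReduction J K ρ₁) (h2 : IsReduction K L ρ₂) :
    IsReduction J L (fun x => ρ₂ (ρ₁ x)) := by
  obtain ⟨a1, a2, a3, a4, a5, a6, a7, a8⟩ := h1
  obtain ⟨b1, b2, b3, b4, b5, b6, b7, b8⟩ := h2
  refine ⟨fun x hx => b1 _ (a1 x hx), ?_, ?_, ?_, ?_, ?_, ?_, ?_⟩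
  · -- surjectivity
    intro y hy
    obtain ⟨v, hv, hvy⟩ := b2 y hy
    obtain ⟨u, hu, huv⟩ := a2 v hv
    exact ⟨u, hu, by simp only; rw [huv, hvy]⟩
  · -- monotone
    intro x hx y hy hxy
    exact b3 _ (a1 x hx) _ (a1 y hy) (a3 x hx y hy hxy)
  · -- injective on vertex preimages
    intro x hx y hy h0 heq
    replace h0 : L.rk (ρ₂ (ρ₁ x)) = 0 := h0
    replace heq : ρ₂ (ρ₁ x) = ρ₂ (ρ₁ y) := heq
    have hx' := a1 x hx
    have hy' := a1 y hy
    have e1 : K.rk (ρ₁ x) ≤ L.rk (ρ₂ (ρ₁ x)) := red_rk_le hK ⟨b1, b2, b3, b4, b5, b6, b7, b8⟩ hx'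
    have h0K : K.rk (ρ₁ x) = 0 := by omega
    exact a4 x hx y hy h0K (b4 _ hx' _ hy' h0 heq)
  · -- meet condition
    intro x hx g hg h hh
    have hgc : g ∈ J.cells := hg.1
    have hgK : ρ₁ g ∈ K.cells := a1 g hgc
    have hσg : ρ₂ (ρ₁ g) ∈ L.cells := b1 _ hgK
    have hfwd : ρ₂ (ρ₁ g) ⊆ h := by
      refine hh.2.2 _ hσg ?_
      intro s hs
      obtain ⟨w, hw, rfl⟩ := Finset.mem_image.mp hs
      have hwc : w ∈ J.cells := (mem_cface'.mp hw).1
      exact b3 _ hgK _ (a1 w hwc) (a3 g hgc w hwc (hg.2.1 w hw))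
    refine subset_antisymm hfwd ?_
    rcases Finset.eq_empty_or_nonempty (J.cface x) with hemp | hne
    · obtain ⟨v, hv, hvh⟩ := b2 h hh.1
      obtain ⟨u, hu, huv⟩ := a2 v hv
      have hug : u ⊆ g := hg.2.2 u hu (by simp [hemp])
      have : ρ₂ (ρ₁ u) ⊆ ρ₂ (ρ₁ g) :=
        b3 _ (a1 u hu) _ hgK (a3 u hu g hgc hug)
      rw [huv, hvh] at this
      exact this
    · have hxg : x ⊆ g := hg.2.2 x hx fun s hs => (mem_cface'.mp hs).2.1
      have hTc : ∀ s ∈ (J.cface x).image ρ₁, s ∈ K.cells := by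
        intro s hs
        obtain ⟨w, hw, rfl⟩ := Finset.mem_image.mp hs
        exact a1 _ (mem_cface'.mp hw).1
      have hρx : ρ₁ x ∈ K.cells := a1 x hx
      have hlbT : ∀ s ∈ (J.cface x).image ρ₁, ρ₁ x ⊆ s := by
        intro s hs
        obtain ⟨w, hw, rfl⟩ := Finset.mem_image.mp hs
        exact a3 x hx _ (mem_cface'.mp hw).1 (mem_cface'.mp hw).2.1
      obtain ⟨m, hm, hxm⟩ := exists_meet hK hTc (hne.image ρ₁) hρx hlbT
      have hgm : ρ₁ g = m := a5 x hx g hg m hm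
      by_cases hmem : ∃ w₀ ∈ J.cface x, ρ₁ w₀ = m
      · obtain ⟨w₀, hw₀, hw₀m⟩ := hmem
        have hhw : h ⊆ ρ₂ (ρ₁ w₀) :=
          hh.2.1 _ (Finset.mem_image_of_mem _ hw₀)
        rw [hw₀m, ← hgm] at hhw
        exact hhw
      · push_neg at hmem
        have hstrict : ∀ s ∈ (J.cface x).image ρ₁, m ⊂ s := by
          intro s hs
          refine lt_of_le_of_ne (hm.2.1 _ hs) ?_
          obtain ⟨w, hw, rfl⟩ := Finset.mem_image.mp hs
          exact fun he => hmem w hw he.symm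
        have hmc : m ∈ K.cells := hm.1
        have hMeet : K.IsMeetOf (K.cface m) m := by
          refine ⟨hmc, fun z hz => (mem_cface'.mp hz).2.1, ?_⟩
          intro b hb hblow
          refine hm.2.2 b hb ?_
          intro s hs
          obtain ⟨z, hz, hmz, hzs, hrz⟩ :=
            hK.2.2.2.2.2.1 m hmc s (hTc s hs) (hstrict s hs)
          exact (hblow z (mem_cface'.mpr ⟨hz, hmz.subset, hrz⟩)).trans hzs
        obtain ⟨s₀, hs₀⟩ := hne.image ρ₁
        obtain ⟨z₀, hz₀, hmz₀, -, hrz₀⟩ :=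
          hK.2.2.2.2.2.1 m hmc s₀ (hTc s₀ hs₀) (hstrict s₀ hs₀)
        have hcfne : (K.cface m).Nonempty := ⟨z₀, mem_cface'.mpr ⟨hz₀, hmz₀.subset, hrz₀⟩⟩
        have hCc : ∀ s ∈ (K.cface m).image ρ₂, s ∈ L.cells := by
          intro s hs
          obtain ⟨z, hz, rfl⟩ := Finset.mem_image.mp hs
          exact b1 _ (mem_cface'.mp hz).1
        have hClb : ∀ s ∈ (K.cface m).image ρ₂, ρ₂ m ⊆ s := by
          intro s hs
          obtain ⟨z, hz, rfl⟩ := Finset.mem_image.mp hs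
          exact b3 m hmc _ (mem_cface'.mp hz).1 (mem_cface'.mp hz).2.1
        obtain ⟨h', hh', -⟩ := exists_meet hL hCc (hcfne.image ρ₂) (b1 m hmc) hClb
        have hσm : ρ₂ m = h' := b5 m hmc m hMeet h' hh'
        have hkey : ∀ z ∈ K.cface m, h ⊆ ρ₂ z := by
          intro z hz
          obtain ⟨hzc, hmz, hrz⟩ := mem_cface'.mp hz
          obtain ⟨w, hw, hgw, hrw, hρw⟩ := a6 g hgc z hzc (hgm ▸ hmz)
          have e3 : J.rk g ≤ K.rk m := by
            have := red_rk_le hJ ⟨a1, a2, a3, a4, a5, a6, a7, a8⟩ hgc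
            rwa [hgm] at this
          have e4 : J.rk x ≤ J.rk g := rk_le_of_subset hJ hx hgc hxg
          have hxw : x ⊂ w := by
            refine lt_of_le_of_ne (hxg.trans hgw) ?_
            intro heq
            rw [← heq] at hrw
            omega
          obtain ⟨s, hsc, hxs, hsw, hrs⟩ := hJ.2.2.2.2.2.1 x hx w hw hxw
          have hsmem : s ∈ J.cface x := mem_cface'.mpr ⟨hsc, hxs.subset, hrs⟩
          have hhs : h ⊆ ρ₂ (ρ₁ s) := hh.2.1 _ (Finset.mem_image_of_mem _ hsmem)
          refine hhs.trans ?_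
          have : ρ₂ (ρ₁ s) ⊆ ρ₂ (ρ₁ w) :=
            b3 _ (a1 s hsc) _ (a1 w hw) (a3 s hsc w hw hsw)
          rwa [hρw] at this
        show h ⊆ ρ₂ (ρ₁ g)
        rw [hgm, hσm]
        refine hh'.2.2 h hh.1 ?_
        intro s hs
        obtain ⟨z, hz, rfl⟩ := Finset.mem_image.mp hs
        exact hkey z hz
  · -- lifting
    intro x hx y hy hsub
    obtain ⟨v, hv, h1v, h2v, h3v⟩ := b6 (ρ₁ x) (a1 x hx) y hy hsub
    obtain ⟨w, hw, haw, hbw, hcw⟩ := a6 x hx v hv h1v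
    exact ⟨w, hw, haw, hbw.trans h2v, by simp only; rw [hcw, h3v]⟩
  · -- degree two
    intro x hx hrk
    replace hrk : J.rk x + 1 = L.rk (ρ₂ (ρ₁ x)) := hrk
    have hx' := a1 x hx
    have e1 : J.rk x ≤ K.rk (ρ₁ x) := red_rk_le hJ ⟨a1, a2, a3, a4, a5, a6, a7, a8⟩ hx
    have e2 : K.rk (ρ₁ x) ≤ L.rk (ρ₂ (ρ₁ x)) := red_rk_le hK ⟨b1, b2, b3, b4, b5, b6, b7, b8⟩ hx'
    rcases Nat.lt_or_ge (J.rk x) (K.rk (ρ₁ x)) with hlt | hge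
    · have hKe : J.rk x + 1 = K.rk (ρ₁ x) := by omega
      have hcard := a7 x hx hKe
      have hEq : ((J.cface x).filter fun w => ρ₂ (ρ₁ w) = ρ₂ (ρ₁ x)) =
          ((J.cface x).filter fun w => ρ₁ w = ρ₁ x) := by
        refine Finset.filter_congr ?_
        intro w hw
        obtain ⟨hwc, hxw, hrw⟩ := mem_cface'.mp hw
        constructor
        · intro hσ
          have m1 : K.rk (ρ₁ w) ≤ L.rk (ρ₂ (ρ₁ w)) :=
            red_rk_le hK ⟨b1, b2, b3, b4, b5, b6, b7, b8⟩ (a1 w hwc)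
          have m2 : J.rk w ≤ K.rk (ρ₁ w) := red_rk_le hJ ⟨a1, a2, a3, a4, a5, a6, a7, a8⟩ hwc
          rw [hσ] at m1
          exact (eq_of_subset_of_rk_le hK hx' (a1 w hwc)
            (a3 x hx w hwc hxw) (by omega)).symm
        · intro h'
          rw [h']
      calc ((J.cface x).filter fun w => ρ₂ (ρ₁ w) = ρ₂ (ρ₁ x)).card
          = ((J.cface x).filter fun w => ρ₁ w = ρ₁ x).card := by rw [hEq]
        _ = 2 := hcard
    · have hKe : J.rk x = K.rk (ρ₁ x) := le_antisymm e1 hge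
      have hrk2 : K.rk (ρ₁ x) + 1 = L.rk (ρ₂ (ρ₁ x)) := by omega
      have hcard := b7 (ρ₁ x) hx' hrk2
      rw [← hcard]
      have hmemkey : ∀ w ∈ (J.cface x).filter fun w => ρ₂ (ρ₁ w) = ρ₂ (ρ₁ x),
          ρ₁ w ∈ (K.cface (ρ₁ x)).filter fun v => ρ₂ v = ρ₂ (ρ₁ x) := by
        intro w hw
        obtain ⟨hwf, hσ⟩ := Finset.mem_filter.mp hw
        obtain ⟨hwc, hxw, hrw⟩ := mem_cface'.mp hwf
        have m1 : K.rk (ρ₁ w) ≤ L.rk (ρ₂ (ρ₁ w)) :=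
          red_rk_le hK ⟨b1, b2, b3, b4, b5, b6, b7, b8⟩ (a1 w hwc)
        have m2 : J.rk w ≤ K.rk (ρ₁ w) := red_rk_le hJ ⟨a1, a2, a3, a4, a5, a6, a7, a8⟩ hwc
        rw [hσ] at m1
        refine Finset.mem_filter.mpr ⟨mem_cface'.mpr ⟨a1 w hwc, a3 x hx w hwc hxw, by omega⟩, hσ⟩
      refine Finset.card_bij (fun w _ => ρ₁ w) hmemkey ?_ ?_
      · intro w1 hw1 w2 hw2 heq
        have k1 := hmemkey w1 hw1
        have k2 := hmemkey w2 hw2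
        have hc := a8 x hx hKe (ρ₁ w1) (Finset.mem_filter.mp k1).1
        have hone := Finset.card_le_one.mp (le_of_eq hc)
        refine hone w1 ?_ w2 ?_
        · exact Finset.mem_filter.mpr ⟨(Finset.mem_filter.mp hw1).1, rfl⟩
        · exact Finset.mem_filter.mpr ⟨(Finset.mem_filter.mp hw2).1, heq.symm⟩
      · intro v hv
        obtain ⟨hvf, hρv⟩ := Finset.mem_filter.mp hv
        have hc := a8 x hx hKe v hvf
        obtain ⟨w, hwEq⟩ := Finset.card_eq_one.mp hc
        have hwmem : w ∈ (J.cface x).filter fun u => ρ₁ u = v := by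
          rw [hwEq]; exact Finset.mem_singleton_self w
        obtain ⟨hwf, hwv⟩ := Finset.mem_filter.mp hwmem
        refine ⟨w, Finset.mem_filter.mpr ⟨hwf, ?_⟩, hwv⟩
        show ρ₂ (ρ₁ w) = ρ₂ (ρ₁ x)
        rw [hwv, hρv]
  · -- unique lifts of cofaces
    intro x hx hrk y hy
    replace hrk : J.rk x = L.rk (ρ₂ (ρ₁ x)) := hrk
    replace hy : y ∈ L.cface (ρ₂ (ρ₁ x)) := hy
    have hx' := a1 x hx
    have e1 : J.rk x ≤ K.rk (ρ₁ x) := red_rk_le hJ ⟨a1, a2, a3, a4, a5, a6, a7, a8⟩ hx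
    have e2 : K.rk (ρ₁ x) ≤ L.rk (ρ₂ (ρ₁ x)) := red_rk_le hK ⟨b1, b2, b3, b4, b5, b6, b7, b8⟩ hx'
    have hKe : J.rk x = K.rk (ρ₁ x) := by omega
    have hyr : L.rk y = L.rk (ρ₂ (ρ₁ x)) + 1 := (mem_cface'.mp hy).2.2
    have h2c := b8 (ρ₁ x) hx' (by omega) y hy
    obtain ⟨v, hvEq⟩ := Finset.card_eq_one.mp h2c
    have hvmem : v ∈ (K.cface (ρ₁ x)).filter fun u => ρ₂ u = y := by
      rw [hvEq]; exact Finset.mem_singleton_self v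
    obtain ⟨hvf, hvy⟩ := Finset.mem_filter.mp hvmem
    have h1c := a8 x hx hKe v hvf
    obtain ⟨w1, hw1Eq⟩ := Finset.card_eq_one.mp h1c
    have hw1mem : w1 ∈ (J.cface x).filter fun u => ρ₁ u = v := by
      rw [hw1Eq]; exact Finset.mem_singleton_self w1
    obtain ⟨hw1f, hw1v⟩ := Finset.mem_filter.mp hw1mem
    refine Finset.card_eq_one.mpr ⟨w1, Finset.eq_singleton_iff_unique_mem.mpr ⟨?_, ?_⟩⟩
    · exact Finset.mem_filter.mpr ⟨hw1f, by show ρ₂ (ρ₁ w1) = y; rw [hw1v, hvy]⟩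
    · intro u humemu
      obtain ⟨huf, hσu⟩ := Finset.mem_filter.mp humemu
      have hσu2 : ρ₂ (ρ₁ u) = y := hσu
      obtain ⟨huc, hxu, hru⟩ := mem_cface'.mp huf
      have m1 : K.rk (ρ₁ u) ≤ L.rk (ρ₂ (ρ₁ u)) :=
        red_rk_le hK ⟨b1, b2, b3, b4, b5, b6, b7, b8⟩ (a1 u huc)
      have m2 : J.rk u ≤ K.rk (ρ₁ u) := red_rk_le hJ ⟨a1, a2, a3, a4, a5, a6, a7, a8⟩ huc
      rw [hσu2, hyr] at m1
      have humem : ρ₁ u ∈ (K.cface (ρ₁ x)).filter fun z => ρ₂ z = y := by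
        refine Finset.mem_filter.mpr ⟨mem_cface'.mpr ⟨a1 u huc, a3 x hx u huc hxu, by omega⟩, hσu2⟩
      have huv : ρ₁ u = v := by
        rw [hvEq] at humem
        exact Finset.mem_singleton.mp humem
      have humem2 : u ∈ (J.cface x).filter fun z => ρ₁ z = v :=
        Finset.mem_filter.mpr ⟨huf, huv⟩
      rw [hw1Eq] at humem2
      exact Finset.mem_singleton.mp humem2

lemma col_trans (hJ : J.IsCC) (hK : K.IsCC) (hL : L.IsCC)
    (h1 : IsCollapse J K π₁) (h2 : IsCollapse K L π₂) :
    IsCollapse J L (fun x => π₂ (π₁ x)) := by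
  obtain ⟨a1, a2, a3, a4, a5, a6, a7, a8⟩ := h1
  obtain ⟨b1, b2, b3, b4, b5, b6, b7, b8⟩ := h2
  have hcrk1 : ∀ x ∈ J.cells, K.rk (π₁ x) ≤ J.rk x :=
    fun x hx => col_rk_le hJ ⟨a1, a2, a3, a4, a5, a6, a7, a8⟩ hx
  have hcrk2 : ∀ x ∈ K.cells, L.rk (π₂ x) ≤ K.rk x :=
    fun x hx => col_rk_le hK ⟨b1, b2, b3, b4, b5, b6, b7, b8⟩ hx
  have hup : ∀ x ∈ J.cells, L.rk (π₂ (π₁ x)) ≥ 0 := fun _ _ => Nat.zero_le _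
  refine ⟨fun x hx => b1 _ (a1 x hx), ?_, ?_, ?_, ?_, ?_, ?_, ?_⟩
  · -- surjectivity
    intro y hy
    obtain ⟨v, hv, hvy⟩ := b2 y hy
    obtain ⟨u, hu, huv⟩ := a2 v hv
    exact ⟨u, hu, by show π₂ (π₁ u) = y; rw [huv, hvy]⟩
  · -- monotone
    intro x hx y hy hxy
    exact b3 _ (a1 x hx) _ (a1 y hy) (a3 x hx y hy hxy)
  · -- injective on preimages of maximal cells
    intro x hx y hy hmax heq
    replace hmax : ∀ z ∈ L.cells, ¬ π₂ (π₁ x) ⊂ z := hmax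
    replace heq : π₂ (π₁ x) = π₂ (π₁ y) := heq
    have hx' := a1 x hx
    have hy' := a1 y hy
    have hKeq : π₁ x = π₁ y := b4 _ hx' _ hy' hmax heq
    refine a4 x hx y hy ?_ hKeq
    intro z hz hlt
    obtain ⟨z', hz', hzz', hzmax⟩ := exists_maximal_cell K hz
    have hsub : π₂ (π₁ x) ⊆ π₂ z' := b3 _ hx' _ hz' (hlt.subset.trans hzz')
    have heqz : π₂ (π₁ x) = π₂ z' :=
      subset_antisymm hsub (by
        by_contra hns
        exact hmax (π₂ z') (b1 z' hz') (lt_of_le_of_ne hsub (fun he => hns (he ▸ subset_rfl))))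
    have hxeq : π₁ x = z' := b4 _ hx' _ hz' hmax heqz
    have hxz' : π₁ x ⊂ z' := lt_of_lt_of_le hlt hzz'
    rw [hxeq] at hxz'
    exact hxz'.ne rfl
  · -- join condition
    intro x hx hr1
    replace hr1 : 1 ≤ J.rk x := hr1
    have hπx : π₁ x ∈ K.cells := a1 x hx
    refine ⟨b1 _ hπx, ?_, ?_⟩
    · intro s hs
      obtain ⟨w, hw, rfl⟩ := Finset.mem_image.mp hs
      have hwc : w ∈ J.cells := (mem_face'.mp hw).1
      exact b3 _ (a1 w hwc) _ hπx (a3 w hwc x hx (mem_face'.mp hw).2.1)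
    · intro b hb hub
      show π₂ (π₁ x) ⊆ b
      rcases Nat.eq_zero_or_pos (K.rk (π₁ x)) with h0 | hpos
      · obtain ⟨a, ha⟩ := hJ.1 x hx
        obtain ⟨w, hwc, hwx, hrw, haw⟩ := exists_face_mem hJ hx hr1 ha
        have hwf : w ∈ J.face x := mem_face'.mpr ⟨hwc, hwx, hrw⟩
        have hsub : π₁ w ⊆ π₁ x := a3 w hwc x hx hwx
        have hcard : (π₁ x).card = 1 := (hK.2.2.1 _ hπx).mp h0
        have heq : π₁ w = π₁ x := Finset.eq_of_subset_of_card_le hsub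
          (by rw [hcard]; exact Finset.card_pos.mpr (hK.1 _ (a1 w hwc)))
        have hσw : π₂ (π₁ w) ⊆ b := hub _ (Finset.mem_image_of_mem _ hwf)
        rw [← heq]
        exact hσw
      · have hJoin := b5 (π₁ x) hπx hpos
        refine hJoin.2.2 b hb ?_
        intro s hs
        obtain ⟨z, hz, rfl⟩ := Finset.mem_image.mp hs
        obtain ⟨hzc, hzx, hrz⟩ := mem_face'.mp hz
        obtain ⟨w', hw'c, hw'x, hrw', hπw'⟩ := a6 x hx z hzc hzx
        have hw'lt : w' ⊂ x := by
          refine lt_of_le_of_ne hw'x ?_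
          intro heq
          have := hcrk1 x hx
          rw [heq] at hrw'
          omega
        obtain ⟨w, hwc, hw'w, hwx2, hrw⟩ :=
          exists_face_between hJ (J.rk x) hw'c hx hw'lt (by omega)
        have hwf : w ∈ J.face x := mem_face'.mpr ⟨hwc, hwx2, hrw⟩
        have step1 : π₂ z ⊆ π₂ (π₁ w) := by
          rw [← hπw']
          exact b3 _ (a1 w' hw'c) _ (a1 w hwc) (a3 w' hw'c w hwc hw'w)
        exact step1.trans (hub _ (Finset.mem_image_of_mem _ hwf))
  · -- lifting
    intro x hx y hy hsub
    replace hsub : y ⊆ π₂ (π₁ x) := hsub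
    obtain ⟨v, hv, h1v, h2v, h3v⟩ := b6 (π₁ x) (a1 x hx) y hy hsub
    obtain ⟨w, hw, haw, hbw, hcw⟩ := a6 x hx v hv h1v
    exact ⟨w, hw, haw, hbw.trans h2v, by show π₂ (π₁ w) = y; rw [hcw, h3v]⟩
  · -- degree two
    intro x hx hrk
    replace hrk : L.rk (π₂ (π₁ x)) + 1 = J.rk x := hrk
    have hx' := a1 x hx
    have e1 : K.rk (π₁ x) ≤ J.rk x := hcrk1 x hx
    have e2 : L.rk (π₂ (π₁ x)) ≤ K.rk (π₁ x) := hcrk2 _ hx'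
    rcases Nat.lt_or_ge (K.rk (π₁ x)) (J.rk x) with hlt | hge
    · have hKe : K.rk (π₁ x) + 1 = J.rk x := by omega
      have hcard := a7 x hx hKe
      have hEq : ((J.face x).filter fun w => π₂ (π₁ w) = π₂ (π₁ x)) =
          ((J.face x).filter fun w => π₁ w = π₁ x) := by
        refine Finset.filter_congr ?_
        intro w hw
        obtain ⟨hwc, hwx, hrw⟩ := mem_face'.mp hw
        constructor
        · intro hσ
          have m1 : L.rk (π₂ (π₁ w)) ≤ K.rk (π₁ w) := hcrk2 _ (a1 w hwc)
          have m2 : K.rk (π₁ w) ≤ J.rk w := hcrk1 w hwc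
          rw [hσ] at m1
          exact eq_of_subset_of_rk_le hK (a1 w hwc) hx'
            (a3 w hwc x hx hwx) (by omega)
        · intro h'
          rw [h']
      calc ((J.face x).filter fun w => π₂ (π₁ w) = π₂ (π₁ x)).card
          = ((J.face x).filter fun w => π₁ w = π₁ x).card := by rw [hEq]
        _ = 2 := hcard
    · have hKe : J.rk x = K.rk (π₁ x) := le_antisymm hge e1
      have hrk2 : L.rk (π₂ (π₁ x)) + 1 = K.rk (π₁ x) := by omega
      have hcard := b7 (π₁ x) hx' hrk2
      rw [← hcard]
      have hmemkey : ∀ w ∈ (J.face x).filter fun w => π₂ (π₁ w) = π₂ (π₁ x),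
          π₁ w ∈ (K.face (π₁ x)).filter fun v => π₂ v = π₂ (π₁ x) := by
        intro w hw
        obtain ⟨hwf, hσ⟩ := Finset.mem_filter.mp hw
        have hσ2 : π₂ (π₁ w) = π₂ (π₁ x) := hσ
        obtain ⟨hwc, hwx, hrw⟩ := mem_face'.mp hwf
        have m1 : L.rk (π₂ (π₁ w)) ≤ K.rk (π₁ w) := hcrk2 _ (a1 w hwc)
        have m2 : K.rk (π₁ w) ≤ J.rk w := hcrk1 w hwc
        rw [hσ2] at m1
        exact Finset.mem_filter.mpr
          ⟨mem_face'.mpr ⟨a1 w hwc, a3 w hwc x hx hwx, by omega⟩, hσ2⟩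
      refine Finset.card_bij (fun w _ => π₁ w) hmemkey ?_ ?_
      · intro w1 hw1 w2 hw2 heq
        have k1 := hmemkey w1 hw1
        have hc := a8 x hx hKe (π₁ w1) (Finset.mem_filter.mp k1).1
        have hone := Finset.card_le_one.mp (le_of_eq hc)
        refine hone w1 ?_ w2 ?_
        · exact Finset.mem_filter.mpr ⟨(Finset.mem_filter.mp hw1).1, rfl⟩
        · exact Finset.mem_filter.mpr ⟨(Finset.mem_filter.mp hw2).1, heq.symm⟩
      · intro v hv
        obtain ⟨hvf, hπv⟩ := Finset.mem_filter.mp hv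
        have hc := a8 x hx hKe v hvf
        obtain ⟨w1, hw1Eq⟩ := Finset.card_eq_one.mp hc
        have hw1mem : w1 ∈ (J.face x).filter fun u => π₁ u = v := by
          rw [hw1Eq]; exact Finset.mem_singleton_self w1
        obtain ⟨hw1f, hw1v⟩ := Finset.mem_filter.mp hw1mem
        refine ⟨w1, Finset.mem_filter.mpr ⟨hw1f, ?_⟩, hw1v⟩
        show π₂ (π₁ w1) = π₂ (π₁ x)
        rw [hw1v, hπv]
  · -- unique lifts of faces
    intro x hx hrk y hy
    replace hrk : J.rk x = L.rk (π₂ (π₁ x)) := hrk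
    replace hy : y ∈ L.face (π₂ (π₁ x)) := hy
    have hx' := a1 x hx
    have e1 : K.rk (π₁ x) ≤ J.rk x := hcrk1 x hx
    have e2 : L.rk (π₂ (π₁ x)) ≤ K.rk (π₁ x) := hcrk2 _ hx'
    have hKe : J.rk x = K.rk (π₁ x) := by omega
    have hKe2 : K.rk (π₁ x) = L.rk (π₂ (π₁ x)) := by omega
    have hyr : L.rk y + 1 = L.rk (π₂ (π₁ x)) := (mem_face'.mp hy).2.2
    have h2c := b8 (π₁ x) hx' hKe2 y hy
    obtain ⟨v, hvEq⟩ := Finset.card_eq_one.mp h2c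
    have hvmem : v ∈ (K.face (π₁ x)).filter fun u => π₂ u = y := by
      rw [hvEq]; exact Finset.mem_singleton_self v
    obtain ⟨hvf, hvy⟩ := Finset.mem_filter.mp hvmem
    have h1c := a8 x hx hKe v hvf
    obtain ⟨w1, hw1Eq⟩ := Finset.card_eq_one.mp h1c
    have hw1mem : w1 ∈ (J.face x).filter fun u => π₁ u = v := by
      rw [hw1Eq]; exact Finset.mem_singleton_self w1
    obtain ⟨hw1f, hw1v⟩ := Finset.mem_filter.mp hw1mem
    refine Finset.card_eq_one.mpr ⟨w1, Finset.eq_singleton_iff_unique_mem.mpr ⟨?_, ?_⟩⟩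
    · exact Finset.mem_filter.mpr ⟨hw1f, by show π₂ (π₁ w1) = y; rw [hw1v, hvy]⟩
    · intro u humemu
      obtain ⟨huf, hσu⟩ := Finset.mem_filter.mp humemu
      have hσu2 : π₂ (π₁ u) = y := hσu
      obtain ⟨huc, hux, hru⟩ := mem_face'.mp huf
      have m1 : L.rk (π₂ (π₁ u)) ≤ K.rk (π₁ u) := hcrk2 _ (a1 u huc)
      have m2 : K.rk (π₁ u) ≤ J.rk u := hcrk1 u huc
      rw [hσu2] at m1
      have humem : π₁ u ∈ (K.face (π₁ x)).filter fun z => π₂ z = y := by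
        refine Finset.mem_filter.mpr
          ⟨mem_face'.mpr ⟨a1 u huc, a3 u huc x hx hux, by omega⟩, hσu2⟩
      have huv : π₁ u = v := by
        rw [hvEq] at humem
        exact Finset.mem_singleton.mp humem
      have humem2 : u ∈ (J.face x).filter fun z => π₁ z = v :=
        Finset.mem_filter.mpr ⟨huf, huv⟩
      rw [hw1Eq] at humem2
      exact Finset.mem_singleton.mp humem2

end Statement19Helpers


/-- The relations `≺` (existence of a reduction) and `⊢`
(existence of a collapse) are partial orders on the set of pure cell
complexes, up to cc-isomorphism: both are reflexive and transitive, and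
antisymmetric modulo isomorphism. -/
theorem statement_19 :
    (∀ K : Precc V, K.IsCC → K.Pure →
      (∃ ρ : Finset V → Finset V, Precc.IsReduction K K ρ) ∧
      (∃ π : Finset V → Finset V, Precc.IsCollapse K K π)) ∧
    (∀ J K L : Precc V, J.IsCC → K.IsCC → L.IsCC → J.Pure → K.Pure → L.Pure →
      ((∃ ρ, Precc.IsReduction J K ρ) → (∃ ρ, Precc.IsReduction K L ρ) →
        ∃ ρ, Precc.IsReduction J L ρ) ∧
      ((∃ π, Precc.IsCollapse J K π) → (∃ π, Precc.IsCollapse K L π) →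
        ∃ π, Precc.IsCollapse J L π)) ∧
    (∀ J K : Precc V, J.IsCC → K.IsCC → J.Pure → K.Pure →
      ((∃ ρ, Precc.IsReduction J K ρ) → (∃ ρ, Precc.IsReduction K J ρ) →
        Precc.IsIso J K) ∧
      ((∃ π, Precc.IsCollapse J K π) → (∃ π, Precc.IsCollapse K J π) →
        Precc.IsIso J K)) := by
  refine ⟨?_, ?_, ?_⟩
  · intro K hK _
    exact ⟨⟨id, red_refl hK⟩, ⟨id, col_refl hK⟩⟩
  · intro J K L hJ hK hL _ _ _
    constructor
    · rintro ⟨ρ₁, h1⟩ ⟨ρ₂, h2⟩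
      exact ⟨_, red_trans hJ hK hL h1 h2⟩
    · rintro ⟨π₁, h1⟩ ⟨π₂, h2⟩
      exact ⟨_, col_trans hJ hK hL h1 h2⟩
  · intro J K hJ hK _ _
    constructor
    · rintro ⟨ρ₁, h1⟩ ⟨ρ₂, h2⟩
      exact red_antisymm hJ hK h1 h2
    · rintro ⟨π₁, h1⟩ ⟨π₂, h2⟩
      exact col_antisymm hJ hK h1 h2

end Precc
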